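/- arXiv:1510.01689 — 8 statements merged into one kernel-verified Lean document; each statement's English description precedes it below -/
import Mathlib

section
/- Every uncountable abelian group has a countable quotient which is not finitely generated. -/
/-!
Since `A` is uncountable it is not finitely generated, so it contains a strictly increasing
chain of finitely generated subgroups; their union `F` is countable and not finitely generated.
By Zorn, take `N` maximal with `N ∩ F = 1`. Then `F` embeds in `A ⧸ N` as an essential subgroup:
maximality of `N` makes every nontrivial cyclic subgroup of `A ⧸ N` meet the image of `F`.
Essentiality puts all elements of prime order into `F`, so every `n`-torsion subgroup, and then
all of `A ⧸ N`, is countable (each fibre of `q ↦ q ^ k` is a coset of the `k`-torsion).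
Finally `A ⧸ N` is not finitely generated, because finitely generated abelian groups are
noetherian and `F` is not finitely generated.
-/

open Function

namespace MonoidHom

variable {G H : Type*} [Group G] [Group H]

theorem countable_preimage (f : G →* H) (hf : (f.ker : Set G).Countable) {t : Set H}
    (ht : t.Countable) : (f ⁻¹' t).Countable := by
  rw [← Set.biUnion_preimage_singleton]
  refine ht.biUnion fun y _ => ?_
  rcases (f ⁻¹' {y}).eq_empty_or_nonempty with h | ⟨x, hx⟩
  · simp [h]
  refine Set.Countable.mono (fun z hz => ?_) (hf.image (x * ·))
  refine ⟨x⁻¹ * z, ?_, mul_inv_cancel_left x z⟩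
  simp_all [MonoidHom.mem_ker]

end MonoidHom

namespace Subgroup

variable {G : Type*} [Group G]

theorem countable_closure {s : Set G} (hs : s.Countable) : (closure s : Set G).Countable := by
  have := hs.to_subtype
  rw [← Subtype.range_coe (s := s), ← FreeGroup.range_lift_eq_closure, MonoidHom.coe_range]
  exact Set.countable_range _

theorem FG.countable {H : Subgroup G} (hH : H.FG) : (H : Set G).Countable := by
  obtain ⟨s, rfl⟩ := hH
  exact countable_closure s.countable_toSet

theorem exists_strictMono_fg (hG : ¬ Group.FG G) :
    ∃ H : ℕ → Subgroup G, StrictMono H ∧ ∀ n, (H n).FG := by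
  classical
  have hproper : ∀ s : Finset G, ∃ x, x ∉ closure (s : Set G) := by
    intro s
    by_contra! h
    exact hG ⟨s, eq_top_iff.2 fun x _ => h x⟩
  choose next hnext using hproper
  let s : ℕ → Finset G := fun n => (fun t => insert (next t) t)^[n] ∅
  refine ⟨fun n => closure (s n), strictMono_nat_of_lt_succ fun n => ?_, fun n => ⟨s n, rfl⟩⟩
  refine SetLike.lt_iff_le_and_exists.2 ⟨closure_mono ?_, next (s n), ?_, hnext (s n)⟩
  · simp [s, iterate_succ_apply']
  · exact subset_closure (by simp [s, iterate_succ_apply'])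

theorem not_fg_iSup_of_strictMono {H : ℕ → Subgroup G} (hH : StrictMono H) :
    ¬ (⨆ n, H n).FG := by
  rintro ⟨t, ht⟩
  have hdir : Directed (· ≤ ·) H := hH.monotone.directed_le
  obtain ⟨m, hm⟩ : ∃ m, (t : Set G) ⊆ H m := by
    refine Directed.exists_mem_subset_of_finset_subset_biUnion
      (fun i j => (hdir i j).imp fun _ h => ⟨h.1, h.2⟩) ?_
    rw [← coe_iSup_of_directed hdir, ← ht]
    exact subset_closure
  have : ⨆ n, H n ≤ H m := ht ▸ (closure_le _).2 hm
  exact (hH m.lt_succ_self).not_ge ((le_iSup H (m + 1)).trans this)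

theorem exists_countable_not_fg (hG : ¬ Countable G) :
    ∃ F : Subgroup G, (F : Set G).Countable ∧ ¬ F.FG := by
  have hnfg : ¬ Group.FG G := fun h =>
    hG (Set.countable_univ_iff.1 (by simpa using h.out.countable))
  obtain ⟨H, hH, hfg⟩ := exists_strictMono_fg hnfg
  refine ⟨⨆ n, H n, ?_, not_fg_iSup_of_strictMono hH⟩
  rw [coe_iSup_of_directed hH.monotone.directed_le]
  exact Set.countable_iUnion fun n => (hfg n).countable

theorem exists_maximal_disjoint (F : Subgroup G) :
    ∃ N : Subgroup G, Maximal (Disjoint · F) N := by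
  have hsSup : ∀ c ⊆ {N : Subgroup G | Disjoint N F}, IsChain (· ≤ ·) c → c.Nonempty →
      Disjoint (sSup c) F := by
    rintro c hc hchain hne
    refine disjoint_def.2 fun hx hxF => ?_
    obtain ⟨M, hM, hxM⟩ := (mem_sSup_of_directedOn hne hchain.directedOn).1 hx
    exact disjoint_def.1 (hc hM) hxM hxF
  obtain ⟨N, -, hN⟩ := zorn_le_nonempty₀ {N : Subgroup G | Disjoint N F}
    (fun c hc hc' N₀ hN₀ => ⟨sSup c, hsSup c hc hc' ⟨N₀, hN₀⟩, fun _ => le_sSup⟩) ⊥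
    disjoint_bot_left
  exact ⟨N, hN⟩

theorem injective_mk'_comp_subtype {N F : Subgroup G} [N.Normal] (h : Disjoint N F) :
    Injective ((QuotientGroup.mk' N).comp F.subtype) := by
  rw [injective_iff_map_eq_one]
  rintro ⟨x, hx⟩ h1
  simpa using disjoint_def.1 h ((QuotientGroup.eq_one_iff x).1 h1) hx

def IsEssential (S : Subgroup G) : Prop :=
  ∀ g : G, g ≠ 1 → ∃ k : ℤ, g ^ k ≠ 1 ∧ g ^ k ∈ S

theorem IsEssential.mem_of_pow_prime_eq_one {S : Subgroup G} (hS : S.IsEssential) {p : ℕ}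
    (hp : p.Prime) {g : G} (hg : g ^ p = 1) : g ∈ S := by
  rcases eq_or_ne g 1 with rfl | hg1
  · exact one_mem S
  obtain ⟨k, hk1, hkS⟩ := hS g hg1
  have hgp : g ^ (p : ℤ) = 1 := by rw [zpow_natCast, hg]
  have hpk : ¬ (p : ℤ) ∣ k := by
    rintro ⟨c, rfl⟩
    rw [zpow_mul, hgp, one_zpow] at hk1
    exact hk1 rfl
  obtain ⟨a, b, hab⟩ := (Nat.prime_iff_prime_int.1 hp).coprime_iff_not_dvd.2 hpk
  have : g = (g ^ k) ^ b :=
    calc g = g ^ (a * p + b * k) := by rw [hab, zpow_one]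
      _ = (g ^ k) ^ b := by
        rw [zpow_add, mul_comm a, zpow_mul, hgp, one_zpow, one_mul, mul_comm b, zpow_mul]
  exact this ▸ zpow_mem hkS b

variable {A : Type*} [CommGroup A]

theorem IsEssential.countable_ker_powMonoidHom {S : Subgroup A} (hS : S.IsEssential)
    (hSc : (S : Set A).Countable) {n : ℕ} (hn : 0 < n) :
    ((powMonoidHom n : A →* A).ker : Set A).Countable := by
  induction n using induction_on_primes with
  | zero => exact absurd hn (lt_irrefl 0)
  | one => exact (Set.countable_singleton 1).mono fun g hg => by simpa using hg
  | prime_mul p a hp ih =>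
    have hker : ((powMonoidHom p : A →* A).ker : Set A) ⊆ S :=
      fun g hg => hS.mem_of_pow_prime_eq_one hp hg
    refine ((powMonoidHom p).countable_preimage (hSc.mono hker)
      (ih (Nat.pos_of_mul_pos_left hn))).mono fun g hg => ?_
    simpa [pow_mul] using hg

theorem IsEssential.countable {S : Subgroup A} (hS : S.IsEssential)
    (hSc : (S : Set A).Countable) : Countable A := by
  have hker (k : ℤ) (hk : k ≠ 0) : ((zpowGroupHom k : A →* A).ker : Set A).Countable := by
    have : (zpowGroupHom k).ker = (powMonoidHom k.natAbs : A →* A).ker := by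
      ext; simp [pow_natAbs_eq_one]
    rw [this]
    exact hS.countable_ker_powMonoidHom hSc (Int.natAbs_pos.2 hk)
  have hcover : (Set.univ : Set A) ⊆ ⋃ k : ℤ, ⋃ (_ : k ≠ 0), zpowGroupHom k ⁻¹' S := by
    intro g _
    rcases eq_or_ne g 1 with rfl | hg
    · exact Set.mem_biUnion (x := 1) one_ne_zero (by simp)
    obtain ⟨k, hk1, hkS⟩ := hS g hg
    exact Set.mem_biUnion (x := k) (by rintro rfl; simp at hk1) hkS
  refine Set.countable_univ_iff.1 (Set.Countable.mono hcover ?_)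
  exact Set.countable_iUnion fun k => Set.countable_iUnion fun hk =>
    (zpowGroupHom k).countable_preimage (hker k hk) hSc

theorem isEssential_map_mk'_of_maximal_disjoint {N F : Subgroup A}
    (hN : Maximal (Disjoint · F) N) : (F.map (QuotientGroup.mk' N)).IsEssential := by
  intro q hq
  obtain ⟨x, rfl⟩ := QuotientGroup.mk'_surjective N q
  have hxN : x ∉ N := by simpa [QuotientGroup.eq_one_iff] using hq
  have hmeet : ¬ Disjoint (N ⊔ zpowers x) F := fun h =>
    hxN (hN.2 h le_sup_left (mem_sup_right (mem_zpowers x)))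
  obtain ⟨f, hf, hfF, hf1⟩ : ∃ f ∈ N ⊔ zpowers x, f ∈ F ∧ f ≠ 1 := by
    simpa [disjoint_def] using hmeet
  obtain ⟨y, hy, z, hz, rfl⟩ := mem_sup.1 hf
  obtain ⟨k, rfl⟩ := mem_zpowers_iff.1 hz
  have hmk : QuotientGroup.mk' N (y * x ^ k) = QuotientGroup.mk' N x ^ k := by
    simp [(QuotientGroup.eq_one_iff y).2 hy]
  refine ⟨k, ?_, ?_⟩
  · rw [← hmk]
    exact fun h1 => hf1 (disjoint_def.1 hN.1 ((QuotientGroup.eq_one_iff _).1 h1) hfF)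
  · rw [← hmk]
    exact mem_map_of_mem _ hfF

instance groupFG_of_commGroup [Group.FG A] (H : Subgroup A) : Group.FG H := by
  have : Module.Finite ℤ (Additive A) := Module.Finite.iff_addGroup_fg.2 inferInstance
  have := IsNoetherian.noetherian (AddSubgroup.toIntSubmodule H.toAddSubgroup)
  rw [Submodule.fg_iff_addSubgroup_fg, AddSubgroup.toIntSubmodule_toAddSubgroup] at this
  exact (Group.fg_iff_subgroup_fg H).2 ((fg_iff_add_fg H).2 this)

end Subgroup

/-- Every uncountable abelian group has a countable quotient which is
not finitely generated. -/
theorem uncountable_abelian_has_countable_infinitely_generated_quotient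
    {A : Type*} [CommGroup A] (hA : ¬ Countable A) :
    ∃ N : Subgroup A, Countable (A ⧸ N) ∧ ¬ Group.FG (A ⧸ N) := by
  obtain ⟨F, hFc, hFfg⟩ := Subgroup.exists_countable_not_fg hA
  obtain ⟨N, hN⟩ := F.exists_maximal_disjoint
  have hess := Subgroup.isEssential_map_mk'_of_maximal_disjoint hN
  refine ⟨N, hess.countable (by simpa using hFc.image _), fun hQ => hFfg ?_⟩
  let e := MonoidHom.ofInjective (Subgroup.injective_mk'_comp_subtype hN.1)
  have : Group.FG F := Group.fg_of_surjective (f := e.symm.toMonoidHom) e.symm.surjective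
  exact (Group.fg_iff_subgroup_fg F).1 this
end

section
/- If G is a profinite group whose abstract derived subgroup D(G) is open, then G has finite commutator width, i.e., there exists N such that every element of D(G) is a product of at most N commutators. -/
/-!
Let `C` be the set of commutators; it is compact, symmetric and contains `1`, so each power `C ^ k`
is compact, hence closed, and the derived subgroup `D` is the increasing union of the `C ^ k`.
Since `D` is an open subgroup of the compact space `G`, the Baire category theorem yields some
`C ^ k` with nonempty interior. Translating an interior point `x` of `C ^ k` shows that every
element of `C ^ m` is interior to `C ^ (m + 2k)`, so the open sets `interior (C ^ n)` form an
increasing cover of `D`, which is compact (an open subgroup is closed); hence `D ⊆ C ^ N`.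
-/

open Set Pointwise

theorem exists_nonempty_interior_of_isOpen_subset_iUnion_of_closed {X ι : Type*}
    [TopologicalSpace X] [BaireSpace X] [Countable ι] {U : Set X} (hU : IsOpen U)
    (hne : U.Nonempty) {f : ι → Set X} (hc : ∀ i, IsClosed (f i)) (hUf : U ⊆ ⋃ i, f i) :
    ∃ i, (interior (f i)).Nonempty := by
  obtain ⟨i₀, -⟩ := mem_iUnion.1 (hUf hne.some_mem)
  have hcover : ⋃ i, (f i ∪ Uᶜ) = univ := eq_univ_of_forall fun x => by
    by_cases hx : x ∈ U
    · obtain ⟨i, hi⟩ := mem_iUnion.1 (hUf hx)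
      exact mem_iUnion.2 ⟨i, Or.inl hi⟩
    · exact mem_iUnion.2 ⟨i₀, Or.inr hx⟩
  obtain ⟨x, hxU, hx⟩ := (dense_iUnion_interior_of_closed
    (fun i => (hc i).union hU.isClosed_compl) hcover).inter_open_nonempty U hU hne
  obtain ⟨i, hi⟩ := mem_iUnion.1 hx
  refine ⟨i, x, mem_interior.2 ⟨U ∩ interior (f i ∪ Uᶜ), ?_, hU.inter isOpen_interior, hxU, hi⟩⟩
  rintro y ⟨hyU, hy⟩
  exact (interior_subset hy).resolve_right (not_not_intro hyU)

section Group

variable {G : Type*} [Group G]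

theorem Set.pow_inv_subset_pow {s : Set G} (hs : s⁻¹ ⊆ s) (n : ℕ) : (s ^ n)⁻¹ ⊆ s ^ n := by
  rw [← inv_pow]
  exact pow_subset_pow_left hs

theorem Subgroup.exists_mem_pow_of_mem_closure {s : Set G} (hs : s⁻¹ ⊆ s) {g : G}
    (hg : g ∈ Subgroup.closure s) : ∃ n, g ∈ s ^ n := by
  induction hg using Subgroup.closure_induction with
  | mem x hx => exact ⟨1, by rwa [pow_one]⟩
  | one => exact ⟨0, by rw [pow_zero]; rfl⟩
  | mul x y _ _ hx hy =>
    obtain ⟨m, hm⟩ := hx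
    obtain ⟨n, hn⟩ := hy
    exact ⟨m + n, by rw [pow_add]; exact mul_mem_mul hm hn⟩
  | inv x _ hx =>
    obtain ⟨n, hn⟩ := hx
    exact ⟨n, Set.pow_inv_subset_pow hs n (by rwa [mem_inv, inv_inv])⟩

theorem inv_commutatorSet_subset : (commutatorSet G)⁻¹ ⊆ commutatorSet G := by
  rintro g ⟨a, b, hab⟩
  exact ⟨b, a, by rw [← commutatorElement_inv, hab, inv_inv]⟩

theorem exists_commutators_of_mem_commutatorSet_pow {n : ℕ} {g : G}
    (hg : g ∈ commutatorSet G ^ n) :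
    ∃ a b : Fin n → G, g = (List.ofFn fun i => a i * b i * (a i)⁻¹ * (b i)⁻¹).prod := by
  obtain ⟨f, rfl⟩ := Set.mem_pow.1 hg
  choose a b hab using fun i => (f i).2
  exact ⟨a, b, by simp only [← commutatorElement_def, hab]⟩

end Group

section TopologicalGroup

variable {G : Type*} [Group G] [TopologicalSpace G] [IsTopologicalGroup G]

theorem IsCompact.pow {s : Set G} (hs : IsCompact s) : ∀ n : ℕ, IsCompact (s ^ n)
  | 0 => by rw [pow_zero]; exact isCompact_singleton
  | n + 1 => by rw [pow_succ]; exact (hs.pow n).mul hs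

theorem isCompact_commutatorSet [CompactSpace G] : IsCompact (commutatorSet G) := by
  have : commutatorSet G = range fun p : G × G => p.1 * p.2 * p.1⁻¹ * p.2⁻¹ := by
    ext g
    simp [commutatorSet, commutatorElement_def]
  rw [this]
  exact isCompact_range (by fun_prop)

theorem mem_interior_pow_of_mem_pow {s : Set G} (hs : s⁻¹ ⊆ s) {k m : ℕ} {x g : G}
    (hx : x ∈ interior (s ^ k)) (hg : g ∈ s ^ m) : g ∈ interior (s ^ (m + k + k)) := by
  have hx' : x⁻¹ ∈ s ^ k :=
    Set.pow_inv_subset_pow hs k (by rw [mem_inv, inv_inv]; exact interior_subset hx)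
  refine mem_interior.2 ⟨(fun y => x * g⁻¹ * y) ⁻¹' interior (s ^ k), fun y hy => ?_,
    isOpen_interior.preimage (by fun_prop), by simpa using hx⟩
  have hy' : y = g * x⁻¹ * (x * g⁻¹ * y) := by group
  rw [hy', pow_add, pow_add]
  exact mul_mem_mul (mul_mem_mul hg hx') (interior_subset hy)

theorem Subgroup.exists_closure_subset_pow_of_isOpen [CompactSpace G] [T2Space G] {s : Set G}
    (hsc : IsCompact s) (hs1 : 1 ∈ s) (hs : s⁻¹ ⊆ s)
    (hopen : IsOpen (Subgroup.closure s : Set G)) :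
    ∃ N, (Subgroup.closure s : Set G) ⊆ s ^ N := by
  set H := Subgroup.closure s
  have hHpow : (H : Set G) ⊆ ⋃ n, s ^ n := fun g hg =>
    mem_iUnion.2 (Subgroup.exists_mem_pow_of_mem_closure hs hg)
  obtain ⟨k, x, hx⟩ := exists_nonempty_interior_of_isOpen_subset_iUnion_of_closed hopen
    ⟨1, H.one_mem⟩ (fun n => (hsc.pow n).isClosed) hHpow
  have hHint : (H : Set G) ⊆ ⋃ n, interior (s ^ n) := fun g hg => by
    obtain ⟨m, hm⟩ := mem_iUnion.1 (hHpow hg)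
    exact mem_iUnion.2 ⟨_, mem_interior_pow_of_mem_pow hs hx hm⟩
  have hHcompact : IsCompact (H : Set G) := (H.isClosed_of_isOpen hopen).isCompact
  obtain ⟨N, hN⟩ := hHcompact.elim_directed_cover _ (fun _ => isOpen_interior) hHint
    (Monotone.directed_le fun _ _ hmn => interior_mono (pow_subset_pow_right hs1 hmn))
  exact ⟨N, hN.trans interior_subset⟩

end TopologicalGroup

theorem profinite_open_commutator_finite_width_general
    {G : Type*} [Group G] [TopologicalSpace G] [IsTopologicalGroup G]
    [CompactSpace G] [T2Space G]
    (hopen : IsOpen ((commutator G : Subgroup G) : Set G)) :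
    ∃ N : ℕ, ∀ g ∈ commutator G, ∃ a b : Fin N → G,
      g = (List.ofFn fun i => a i * b i * (a i)⁻¹ * (b i)⁻¹).prod := by
  rw [commutator_eq_closure] at hopen ⊢
  obtain ⟨N, hN⟩ := Subgroup.exists_closure_subset_pow_of_isOpen isCompact_commutatorSet
    (one_mem_commutatorSet G) inv_commutatorSet_subset hopen
  exact ⟨N, fun g hg => exists_commutators_of_mem_commutatorSet_pow (hN hg)⟩

/-- If `G` is a profinite group whose abstract derived subgroup is open, then `G` has
finite commutator width: there is `N` such that every element of the derived subgroup
is a product of at most `N` commutators. -/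
theorem profinite_open_commutator_finite_width
    {G : Type*} [Group G] [TopologicalSpace G] [IsTopologicalGroup G]
    [CompactSpace G] [T2Space G] [TotallyDisconnectedSpace G]
    (hopen : IsOpen ((commutator G : Subgroup G) : Set G)) :
    ∃ N : ℕ, ∀ g ∈ commutator G, ∃ a b : Fin N → G,
      g = (List.ofFn fun i => a i * b i * (a i)⁻¹ * (b i)⁻¹).prod :=
  profinite_open_commutator_finite_width_general hopen
end

section
/- Higman's commutator trick: let G be a group of permutations of a set X, and let τ, σ₁, σ₂ ∈ G. If τ(supp(σ₁)) is disjoint from supp(σ₁) ∪ supp(σ₂), then the commutator [σ₁, σ₂] is a product of four conjugates (by elements of G) of τ or τ^{-1}. -/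
/-- The support of a permutation. -/
def permSupp {X : Type*} (σ : Equiv.Perm X) : Set X := {x | σ x ≠ x}

open scoped commutatorElement

/-! Put `β = τ σ₁⁻¹ τ⁻¹`. Its support is `τ(supp σ₁)`, which misses `supp σ₂`, so `β` commutes
with `σ₂`; as `⁅σ₁, τ⁆ = σ₁ β`, this gives `⁅σ₁, σ₂⁆ = ⁅⁅σ₁, τ⁆, σ₂⁆`. Expanding the double
commutator exhibits it as a product of four conjugates of `τ^{±1}` by `σ₁`, `1`, `σ₂`, `σ₂ σ₁`. -/

theorem permSupp_inv {X : Type*} (σ : Equiv.Perm X) : permSupp σ⁻¹ = permSupp σ := by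
  ext x
  exact not_congr (Equiv.Perm.inv_eq_iff_eq.trans eq_comm)

theorem permSupp_conj {X : Type*} (τ σ : Equiv.Perm X) :
    permSupp (τ * σ * τ⁻¹) = τ '' permSupp σ := by
  ext x
  rw [Set.mem_image_equiv]
  exact not_congr τ.eq_symm_apply.symm

theorem Commute.of_disjoint_permSupp {X : Type*} {σ π : Equiv.Perm X}
    (h : Disjoint (permSupp σ) (permSupp π)) : Commute σ π :=
  Equiv.Perm.Disjoint.commute fun x ↦ by
    by_contra! hx
    exact Set.disjoint_left.mp h hx.1 hx.2

theorem commutatorElement_commutatorElement_of_commute {G : Type*} [Group G] {a t b : G}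
    (h : Commute (t * a⁻¹ * t⁻¹) b) : ⁅⁅a, t⁆, b⁆ = ⁅a, b⁆ := by
  calc ⁅⁅a, t⁆, b⁆
      = a * (t * a⁻¹ * t⁻¹ * b) * (t * a⁻¹ * t⁻¹)⁻¹ * a⁻¹ * b⁻¹ := by
        simp only [commutatorElement_def]; group
    _ = a * (b * (t * a⁻¹ * t⁻¹)) * (t * a⁻¹ * t⁻¹)⁻¹ * a⁻¹ * b⁻¹ := by rw [h.eq]
    _ = ⁅a, b⁆ := by rw [commutatorElement_def]; group

theorem commutatorElement_commutatorElement_eq_conj_prod {G : Type*} [Group G] (a t b : G) :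
    ⁅⁅a, t⁆, b⁆ = a * t * a⁻¹ * t⁻¹ * (b * t * b⁻¹) * (b * a * t⁻¹ * (b * a)⁻¹) := by
  simp only [commutatorElement_def]
  group

theorem higman_commutator_trick_general {X : Type*} (G : Subgroup (Equiv.Perm X))
    (τ σ₁ σ₂ : Equiv.Perm X) (h₁ : σ₁ ∈ G) (h₂ : σ₂ ∈ G)
    (hdisj : Disjoint (τ '' permSupp σ₁) (permSupp σ₁ ∪ permSupp σ₂)) :
    ∃ (g : Fin 4 → Equiv.Perm X) (e : Fin 4 → ℤ),
      (∀ i, g i ∈ G) ∧ (∀ i, e i = 1 ∨ e i = -1) ∧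
      ⁅σ₁, σ₂⁆ = (List.ofFn fun i => g i * τ ^ (e i) * (g i)⁻¹).prod := by
  have hcomm : Commute (τ * σ₁⁻¹ * τ⁻¹) σ₂ := by
    refine .of_disjoint_permSupp ?_
    rw [permSupp_conj, permSupp_inv]
    exact hdisj.mono_right Set.subset_union_right
  refine ⟨![σ₁, 1, σ₂, σ₂ * σ₁], ![1, -1, 1, -1], ?_, ?_, ?_⟩
  · intro i
    fin_cases i <;> simp [h₁, h₂, mul_mem h₂ h₁]
  · intro i
    fin_cases i <;> simp
  · rw [← commutatorElement_commutatorElement_of_commute hcomm,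
      commutatorElement_commutatorElement_eq_conj_prod]
    simp [List.ofFn_succ, mul_assoc]

/-- Higman's commutator trick: if `τ, σ₁, σ₂` belong to a permutation group `G` on `X`
and `τ(supp σ₁)` is disjoint from `supp σ₁ ∪ supp σ₂`, then `[σ₁, σ₂]` is a product of
four conjugates of `τ` or `τ⁻¹` by elements of `G`. -/
theorem higman_commutator_trick {X : Type*} (G : Subgroup (Equiv.Perm X))
    (τ σ₁ σ₂ : Equiv.Perm X) (hτ : τ ∈ G) (h₁ : σ₁ ∈ G) (h₂ : σ₂ ∈ G)
    (hdisj : Disjoint (τ '' permSupp σ₁) (permSupp σ₁ ∪ permSupp σ₂)) :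
    ∃ (g : Fin 4 → Equiv.Perm X) (e : Fin 4 → ℤ),
      (∀ i, g i ∈ G) ∧ (∀ i, e i = 1 ∨ e i = -1) ∧
      ⁅σ₁, σ₂⁆ = (List.ofFn fun i => g i * τ ^ (e i) * (g i)⁻¹).prod :=
  higman_commutator_trick_general G τ σ₁ σ₂ h₁ h₂ hdisj
end

section
/- If A and B are two symmetric σ-syndetic subsets of a group G each containing the identity, then A² ∩ B² is σ-syndetic in G. -/
open Pointwise

/-- A subset `A` of a group is σ-syndetic if countably many left translates of `A`
cover the group. -/
def SigmaSyndetic {G : Type*} [Group G] (A : Set G) : Prop :=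
  ∃ g : ℕ → G, ∀ x : G, ∃ n, ∃ a ∈ A, x = g n * a

/-- If `A` and `B` are symmetric σ-syndetic sets containing `1`, then `A² ∩ B²` is
σ-syndetic. -/
theorem sigmaSyndetic_inter_of_sq {G : Type*} [Group G] (A B : Set G)
    (hAsym : A⁻¹ = A) (hBsym : B⁻¹ = B) (hA1 : (1 : G) ∈ A) (hB1 : (1 : G) ∈ B)
    (hA : SigmaSyndetic A) (hB : SigmaSyndetic B) :
    SigmaSyndetic ((A * A) ∩ (B * B)) := by
  classical
  obtain ⟨g, hg⟩ := hA
  obtain ⟨h, hh⟩ := hB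
  set S : ℕ × ℕ → Set G := fun p =>
    {y | ∃ a ∈ A, y = g p.1 * a} ∩ {y | ∃ b ∈ B, y = h p.2 * b} with hS
  set c : ℕ × ℕ → G := fun p => if hp : (S p).Nonempty then hp.choose else 1 with hc
  refine ⟨fun k => c (Nat.pairEquiv.symm k), fun x => ?_⟩
  obtain ⟨n, a, ha, hxa⟩ := hg x
  obtain ⟨m, b, hb, hxb⟩ := hh x
  have hne : (S (n, m)).Nonempty := ⟨x, ⟨a, ha, hxa⟩, ⟨b, hb, hxb⟩⟩
  set y := c (n, m) with hy
  have hyS : y ∈ S (n, m) := by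
    rw [hy, hc]; simp only [dif_pos hne]; exact hne.choose_spec
  obtain ⟨⟨a', ha', hya⟩, ⟨b', hb', hyb⟩⟩ := hyS
  refine ⟨Nat.pairEquiv (n, m), y⁻¹ * x, ⟨?_, ?_⟩, by
    simp [Nat.pairEquiv.symm_apply_apply, hy]⟩
  · have : y⁻¹ * x = a'⁻¹ * a := by rw [hya, hxa]; group
    rw [this]
    exact Set.mul_mem_mul (by rw [← hAsym]; exact Set.inv_mem_inv.mpr ha') ha
  · have : y⁻¹ * x = b'⁻¹ * b := by rw [hyb, hxb]; group
    rw [this]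
    exact Set.mul_mem_mul (by rw [← hBsym]; exact Set.inv_mem_inv.mpr hb') hb
end

section
/- If g₀,…,gₙ are elements of a group G and A ⊆ G is a symmetric σ-syndetic set containing 1, then ⋂_{i=0}^{n} gᵢ A^{2ⁿ} gᵢ^{-1} is a symmetric σ-syndetic set containing 1. -/
open Pointwise

lemma sigmaSyndetic_mono {G : Type*} [Group G] {A B : Set G} (h : A ⊆ B)
    (hA : SigmaSyndetic A) : SigmaSyndetic B := by
  obtain ⟨c, hc⟩ := hA
  exact ⟨c, fun x => by obtain ⟨k, a, ha, hx⟩ := hc x; exact ⟨k, a, h ha, hx⟩⟩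

lemma sigmaSyndetic_conj_image {G : Type*} [Group G] {A : Set G} (h : G)
    (hA : SigmaSyndetic A) : SigmaSyndetic ((fun x => h * x * h⁻¹) '' A) := by
  obtain ⟨c, hc⟩ := hA
  refine ⟨fun k => h * c k * h⁻¹, fun x => ?_⟩
  obtain ⟨k, a, ha, hx⟩ := hc (h⁻¹ * x * h)
  refine ⟨k, h * a * h⁻¹, ⟨a, ha, rfl⟩, ?_⟩
  have hx2 : x = h * (c k * a) * h⁻¹ := by rw [← hx]; group
  rw [hx2]; group

lemma sigmaSyndetic_iInter_inv_mul {G : Type*} [Group G] {m : ℕ} (B : Fin m → Set G)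
    (hB : ∀ i, SigmaSyndetic (B i)) : SigmaSyndetic (⋂ i, (B i)⁻¹ * B i) := by
  choose c hc using hB
  set S : (Fin m → ℕ) → Set G := fun f => ⋂ i, {x | ∃ a ∈ B i, x = c i (f i) * a} with hS
  classical
  set y : (Fin m → ℕ) → G := fun f => if h : (S f).Nonempty then h.choose else 1 with hy
  obtain ⟨e, he⟩ := exists_surjective_nat (Fin m → ℕ)
  refine ⟨fun k => y (e k), fun x => ?_⟩
  choose N a ha hx using fun i => hc i x
  obtain ⟨k, hk⟩ := he N
  have hxS : x ∈ S N := Set.mem_iInter.2 fun i => ⟨a i, ha i, hx i⟩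
  have hne : (S N).Nonempty := ⟨x, hxS⟩
  have hyS : y N ∈ S N := by rw [hy]; simp only [dif_pos hne]; exact hne.choose_spec
  refine ⟨k, (y N)⁻¹ * x, ?_, by simp only [hk]; group⟩
  refine Set.mem_iInter.2 fun i => ?_
  obtain ⟨b, hb, hyb⟩ := Set.mem_iInter.1 hyS i
  have : (y N)⁻¹ * x = b⁻¹ * a i := by rw [hyb, hx i]; group
  rw [this]
  exact Set.mul_mem_mul (Set.inv_mem_inv.2 hb) (ha i)

/-- If `g₀, …, gₙ ∈ G` and `A` is a symmetric σ-syndetic set containing `1`, then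
`⋂ i, gᵢ A^(2ⁿ) gᵢ⁻¹` is a symmetric σ-syndetic set containing `1`. -/
theorem sigmaSyndetic_iInter_conj {G : Type*} [Group G] (n : ℕ) (g : Fin (n + 1) → G)
    (A : Set G) (hsym : A⁻¹ = A) (h1 : (1 : G) ∈ A) (hA : SigmaSyndetic A) :
    (⋂ i, (fun x => g i * x * (g i)⁻¹) '' (A ^ (2 ^ n)))⁻¹
        = ⋂ i, (fun x => g i * x * (g i)⁻¹) '' (A ^ (2 ^ n)) ∧
      (1 : G) ∈ ⋂ i, (fun x => g i * x * (g i)⁻¹) '' (A ^ (2 ^ n)) ∧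
      SigmaSyndetic (⋂ i, (fun x => g i * x * (g i)⁻¹) '' (A ^ (2 ^ n))) := by
  have hpowsym : ∀ k : ℕ, (A ^ k)⁻¹ = A ^ k := fun k => by rw [← inv_pow, hsym]
  have hpow1' : (1 : G) ∈ A ^ (2 ^ n) := Set.one_mem_pow h1
  have hmem : ∀ (h : G) (S : Set G) (x : G),
      x ∈ (fun y => h * y * h⁻¹) '' S ↔ h⁻¹ * x * h ∈ S := by
    intro h S x
    constructor
    · rintro ⟨y, hy, rfl⟩
      have : h⁻¹ * (h * y * h⁻¹) * h = y := by group
      rwa [this]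
    · intro hx; exact ⟨h⁻¹ * x * h, hx, by group⟩
  have key : ∀ x : G, x ∈ (⋂ i, (fun y => g i * y * (g i)⁻¹) '' (A ^ (2 ^ n))) →
      x⁻¹ ∈ (⋂ i, (fun y => g i * y * (g i)⁻¹) '' (A ^ (2 ^ n))) := by
    intro x hx
    refine Set.mem_iInter.2 fun i => (hmem _ _ _).2 ?_
    have h2 := (hmem _ _ _).1 (Set.mem_iInter.1 hx i)
    have h3 : ((g i)⁻¹ * x * g i)⁻¹ ∈ (A ^ (2 ^ n))⁻¹ := Set.inv_mem_inv.2 h2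
    rw [hpowsym] at h3
    have h4 : ((g i)⁻¹ * x * g i)⁻¹ = (g i)⁻¹ * x⁻¹ * g i := by group
    rwa [h4] at h3
  refine ⟨?_, ?_, ?_⟩
  · ext x
    rw [Set.mem_inv]
    exact ⟨fun h => by simpa using key _ h, fun h => key _ h⟩
  · exact Set.mem_iInter.2 fun i => (hmem _ _ _).2 (by simpa using hpow1')
  · clear hpow1' key
    obtain _ | m := n
    · have hone : (⋂ i, (fun x => g i * x * (g i)⁻¹) '' (A ^ (2 ^ 0)))
          = (fun x => g 0 * x * (g 0)⁻¹) '' A := by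
        ext x
        simp [Set.mem_iInter, Fin.forall_fin_one]
      rw [hone]
      exact sigmaSyndetic_conj_image _ hA
    · set B : Fin (m + 1 + 1) → Set G :=
        fun i => (fun x => g i * x * (g i)⁻¹) '' (A ^ (2 ^ m)) with hB
      have hApow : A ⊆ A ^ (2 ^ m) := by
        have h2 : 2 ^ m = (2 ^ m - 1) + 1 := by
          have := Nat.one_le_two_pow (n := m); omega
        rw [h2, pow_succ]
        intro a ha
        have : a = 1 * a := by group
        rw [this]
        exact Set.mul_mem_mul (Set.one_mem_pow h1) ha
      have hBsyn : ∀ i, SigmaSyndetic (B i) := fun i =>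
        sigmaSyndetic_conj_image _ (sigmaSyndetic_mono hApow hA)
      refine sigmaSyndetic_mono ?_ (sigmaSyndetic_iInter_inv_mul B hBsyn)
      intro x hx
      refine Set.mem_iInter.2 fun i => ?_
      obtain ⟨u, hu, v, hv, hx'⟩ := Set.mem_mul.1 (Set.mem_iInter.1 hx i)
      obtain ⟨b, hb, hbu⟩ := Set.mem_inv.1 hu
      obtain ⟨b', hb', hbv⟩ := hv
      refine (hmem _ _ _).2 ?_
      change g i * b * (g i)⁻¹ = u⁻¹ at hbu
      change g i * b' * (g i)⁻¹ = v at hbv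
      have hu2 : u = (g i * b * (g i)⁻¹)⁻¹ := by rw [hbu, inv_inv]
      have heq : (g i)⁻¹ * x * g i = b⁻¹ * b' := by
        rw [← hx', hu2, ← hbv]; group
      have h2p : A ^ 2 ^ (m + 1) = A ^ 2 ^ m * A ^ 2 ^ m := by
        rw [pow_succ 2 m, Nat.mul_two, pow_add]
      rw [heq, h2p]
      refine Set.mul_mem_mul ?_ hb'
      rw [← hpowsym (2 ^ m)]
      exact Set.inv_mem_inv.2 hb
end

section
/- A countably infinite subgroup of a compact Hausdorff topological group is never Cayley bounded. -/
open Pointwise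

/-- A group is Cayley bounded if every symmetric generating set containing `1` has
some power equal to the whole group. -/
def CayleyBounded (G : Type*) [Group G] : Prop :=
  ∀ U : Set G, U⁻¹ = U → (1 : G) ∈ U → Subgroup.closure U = ⊤ →
    ∃ n : ℕ, 1 ≤ n ∧ U ^ n = Set.univ

/-!
Compactness gives a decreasing sequence of conjugation-invariant symmetric neighbourhoods `V n`
of `1` with `V (n + 1) * V (n + 1) ⊆ V n` which successively exclude the nontrivial elements of
`Γ`. Their intersection `N` is a closed normal subgroup meeting `Γ` trivially, and `G ⧸ N` is a
compact Hausdorff group in which `1` has the countable neighbourhood basis `V n * N`; this replaces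
the Peter–Weyl reduction to the metrizable case. Cayley boundedness passes to quotients, so we may
assume `G` first countable. Enumerating `Γ = {a 0, a 1, …}`, compactness of `closure Γ` shows that
for large `n` the element `a n` is a small element of `Γ` times a word in `a 0, …, a (n - 1)`;
these small elements `t n` generate `Γ` and tend to `1`. Then `U = {1} ∪ {(t n)^±1}` is compact,
so `U ^ m = Γ` would make `Γ` a countable compact group, which is finite by Baire's theorem.
-/

open Set Filter Topology Function

theorem CayleyBounded.of_surjective {Γ Δ : Type*} [Group Γ] [Group Δ] (h : CayleyBounded Γ)
    (f : Γ →* Δ) (hf : Surjective f) : CayleyBounded Δ := by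
  intro U hinv h1 hgen
  have hgen' : Subgroup.closure (f ⁻¹' U) = ⊤ := by
    have hker : f.ker ≤ Subgroup.closure (f ⁻¹' U) := fun x hx =>
      Subgroup.subset_closure (by simpa [(MonoidHom.mem_ker).1 hx] using h1)
    rw [← Subgroup.comap_map_eq_self hker, MonoidHom.map_closure, image_preimage_eq U hf, hgen,
      Subgroup.comap_top]
  have hinv' : (f ⁻¹' U)⁻¹ = f ⁻¹' U := by
    ext x
    rw [Set.mem_inv, mem_preimage, mem_preimage, map_inv, ← Set.mem_inv, hinv]
  obtain ⟨n, hn, hU⟩ := h (f ⁻¹' U) hinv' (by simpa using h1) hgen'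
  refine ⟨n, hn, ?_⟩
  rw [← image_preimage_eq U hf, ← image_pow, hU, image_univ, hf.range_eq]

theorem exists_tendsto_forall_mem {X : Type*} {f : Filter X} [f.IsCountablyGenerated]
    {D : ℕ → Set X} (hD : ∀ n, (D n).Nonempty) (h : ∀ s ∈ f, ∀ᶠ n in atTop, (D n ∩ s).Nonempty) :
    ∃ t : ℕ → X, (∀ n, t n ∈ D n) ∧ Tendsto t atTop f := by
  classical
  obtain ⟨V, hV⟩ := f.exists_antitone_basis
  -- `t n` is taken in the smallest `V k`, `k ≤ n`, that `D n` meets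
  let P : ℕ → ℕ → Prop := fun n k => (D n ∩ V k).Nonempty
  let k : ℕ → ℕ := fun n => Nat.findGreatest (P n) n
  let t : ℕ → X := fun n => if hn : (D n ∩ V (k n)).Nonempty then hn.some else (hD n).some
  have ht : ∀ n, (D n ∩ V (k n)).Nonempty → t n ∈ D n ∩ V (k n) := fun n hn => by
    simpa only [t, dif_pos hn] using hn.some_mem
  refine ⟨t, fun n => ?_, hV.toHasBasis.tendsto_right_iff.2 fun m _ => ?_⟩
  · by_cases hn : (D n ∩ V (k n)).Nonempty
    · exact (ht n hn).1
    · simpa only [t, dif_neg hn] using (hD n).some_mem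
  · filter_upwards [h _ (hV.mem m), eventually_ge_atTop m] with n hm hmn
    exact hV.antitone (Nat.le_findGreatest hmn hm)
      (ht n (Nat.findGreatest_spec (P := P n) hmn hm)).2

section TopologicalGroup

variable {G : Type*} [Group G] [TopologicalSpace G] [IsTopologicalGroup G]

theorem CayleyBounded.compactSpace_of_tendsto (h : CayleyBounded G) {t : ℕ → G}
    (hgen : Subgroup.closure (range t) = ⊤) (ht : Tendsto t atTop (𝓝 1)) : CompactSpace G := by
  set K := insert 1 (range t)
  have hK : IsCompact (K ∪ K⁻¹) := ht.isCompact_insert_range.union ht.isCompact_insert_range.inv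
  obtain ⟨n, -, hn⟩ := h (K ∪ K⁻¹) (by rw [union_inv, inv_inv, union_comm])
    (Or.inl (mem_insert 1 _))
    (eq_top_mono (Subgroup.closure_mono fun x hx => Or.inl (mem_insert_of_mem 1 hx)) hgen)
  have hpow : ∀ m : ℕ, IsCompact ((K ∪ K⁻¹) ^ m) := fun m => by
    induction m with
    | zero => simp
    | succ m ih => rw [pow_succ]; exact ih.mul hK
  exact ⟨hn ▸ hpow n⟩

theorem finite_of_compactSpace_of_countable [CompactSpace G] [T2Space G] [Countable G] :
    Finite G := by
  obtain ⟨x, hx⟩ : ∃ x : G, (interior {x}).Nonempty :=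
    nonempty_interior_of_iUnion_of_closed (fun x : G => isClosed_singleton) (iUnion_of_singleton G)
  have hx_open : IsOpen ({x} : Set G) :=
    hx.subset_singleton_iff.1 interior_subset ▸ isOpen_interior
  have : DiscreteTopology G :=
    discreteTopology_of_isOpen_singleton_one (by simpa using isOpenMap_mul_left x⁻¹ _ hx_open)
  exact finite_of_compact_of_discrete

theorem exists_subset_mul_of_directed [CompactSpace G] {ι : Type*} [Nonempty ι] {s : ι → Set G}
    (hs : Directed (· ⊆ ·) s) {W : Set G} (hW : W ∈ 𝓝 1) : ∃ i, ⋃ j, s j ⊆ W * s i := by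
  have hcover : closure (⋃ j, s j) ⊆ ⋃ j, interior W * s j := by
    rw [← mul_iUnion, ← isOpen_interior.mul_closure]
    exact subset_mul_right _ (mem_interior_iff_mem_nhds.2 hW)
  obtain ⟨i, hi⟩ := isClosed_closure.isCompact.elim_directed_cover _
    (fun j => isOpen_interior.mul_right) hcover (hs.mono_comp _ fun _ _ h => mul_subset_mul_left h)
  exact ⟨i, subset_closure.trans (hi.trans (mul_subset_mul_right interior_subset))⟩

theorem Subgroup.exists_tendsto_one_closure_range_eq [CompactSpace G] [FirstCountableTopology G]
    (Γ : Subgroup G) [Countable Γ] :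
    ∃ t : ℕ → G, Subgroup.closure (range t) = Γ ∧ Tendsto t atTop (𝓝 1) := by
  obtain ⟨b, hb⟩ := exists_surjective_nat Γ
  set a : ℕ → G := fun n => b n
  have ha : range a = Γ := by rw [range_comp' Subtype.val b, hb.range_eq, image_univ,
    Subtype.range_coe]
  let Λ : ℕ → Subgroup G := fun n => Subgroup.closure (a '' Iio n)
  have hΛ : ∀ n, Λ n ≤ Γ := fun n =>
    Subgroup.closure_le _ |>.2 ((image_subset_range a _).trans ha.le)
  let D : ℕ → Set G := fun n => {x | x⁻¹ * a n ∈ Λ n}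
  have hD : ∀ n, (D n).Nonempty := fun n => ⟨a n, by simp [D, one_mem]⟩
  have hsmall : ∀ W ∈ 𝓝 (1 : G), ∀ᶠ n in atTop, (D n ∩ W).Nonempty := by
    intro W hW
    have hmono : Monotone fun n => a '' Iio n := fun m n hmn => image_mono (Iio_subset_Iio hmn)
    obtain ⟨N, hN⟩ := exists_subset_mul_of_directed hmono.directed_le hW
    filter_upwards [eventually_ge_atTop N] with n hn
    obtain ⟨w, hw, _, ⟨i, hi, rfl⟩, he⟩ :=
      hN (mem_iUnion.2 ⟨n + 1, mem_image_of_mem a (lt_add_one n)⟩)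
    refine ⟨w, show w⁻¹ * a n ∈ Λ n from ?_, hw⟩
    rw [← he, inv_mul_cancel_left]
    exact Subgroup.subset_closure (mem_image_of_mem a (lt_of_lt_of_le hi hn))
  obtain ⟨t, htD, ht⟩ := exists_tendsto_forall_mem hD hsmall
  have ha_mem : ∀ n, a n ∈ Subgroup.closure (range t) := by
    intro n
    induction n using Nat.strong_induction_on with
    | _ n ih =>
      have hΛt : Λ n ≤ Subgroup.closure (range t) :=
        Subgroup.closure_le _ |>.2 (by rintro _ ⟨i, hi, rfl⟩; exact ih i hi)
      rw [← mul_inv_cancel_left (t n) (a n)]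
      exact mul_mem (Subgroup.subset_closure (mem_range_self n)) (hΛt (htD n))
  refine ⟨t, le_antisymm ?_ ?_, ht⟩
  · refine Subgroup.closure_le _ |>.2 ?_
    rintro _ ⟨n, rfl⟩
    rw [show t n = a n * ((t n)⁻¹ * a n)⁻¹ by group]
    exact mul_mem (b n).2 (inv_mem (hΛ n (htD n)))
  · intro x hx
    obtain ⟨n, rfl⟩ : x ∈ range a := ha ▸ hx
    exact ha_mem n

theorem Subgroup.not_cayleyBounded_of_firstCountableTopology [CompactSpace G] [T2Space G]
    [FirstCountableTopology G] (Γ : Subgroup G) [Countable Γ] [Infinite Γ] : ¬ CayleyBounded Γ := by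
  intro hΓ
  obtain ⟨t, rfl, ht⟩ := Γ.exists_tendsto_one_closure_range_eq
  let s : ℕ → Subgroup.closure (range t) := fun n => ⟨t n, Subgroup.subset_closure ⟨n, rfl⟩⟩
  have hs : Subgroup.closure (range s) = ⊤ := by
    convert Subgroup.closure_closure_coe_preimage (k := range t)
    ext x
    simp [s, Subtype.ext_iff]
  have := hΓ.compactSpace_of_tendsto hs (tendsto_subtype_rng.2 ht)
  have := finite_of_compactSpace_of_countable (G := Subgroup.closure (range t))
  exact not_finite (Subgroup.closure (range t))

end TopologicalGroup

section CompactGroup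

variable {G : Type*} [Group G] [TopologicalSpace G]

theorem eventually_nhds_one_forall_conj_mem [IsTopologicalGroup G] [CompactSpace G] {U : Set G}
    (hU : U ∈ 𝓝 1) :
    ∀ᶠ x in 𝓝 (1 : G), ∀ g : G, g * x * g⁻¹ ∈ U := by
  have hconj : Continuous fun z : G × G => z.2 * z.1 * z.2⁻¹ := by fun_prop
  simpa using isCompact_univ.eventually_forall_of_forall_eventually (x₀ := (1 : G))
    (P := fun x g => g * x * g⁻¹ ∈ U) fun g _ =>
      hconj.continuousAt.preimage_mem_nhds (by simpa using hU)

theorem exists_conj_invariant_nhds_one_mul_subset [IsTopologicalGroup G] [CompactSpace G]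
    {W : Set G} (hW : W ∈ 𝓝 1) :
    ∃ V ∈ 𝓝 (1 : G), V⁻¹ = V ∧ (∀ g, ∀ x ∈ V, g * x * g⁻¹ ∈ V) ∧ V * V ⊆ W := by
  obtain ⟨U, hU, -, hUinv, hUW⟩ := exists_closed_nhds_one_inv_eq_mul_subset hW
  have hVU : {x | ∀ g : G, g * x * g⁻¹ ∈ U} ⊆ U := fun x hx => by simpa using hx 1
  refine ⟨{x | ∀ g : G, g * x * g⁻¹ ∈ U}, eventually_nhds_one_forall_conj_mem hU, ?_,
    fun g x hx h => by simpa [mul_assoc] using hx (h * g), (mul_subset_mul hVU hVU).trans hUW⟩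
  ext x
  refine forall_congr' fun g => ?_
  rw [show g * x⁻¹ * g⁻¹ = (g * x * g⁻¹)⁻¹ by group, ← Set.mem_inv, hUinv]

structure IsNormalNhdsChain (V : ℕ → Set G) : Prop where
  mem_nhds (n : ℕ) : V n ∈ 𝓝 1
  inv_eq (n : ℕ) : (V n)⁻¹ = V n
  conj_mem (n : ℕ) (g : G) : ∀ x ∈ V n, g * x * g⁻¹ ∈ V n
  mul_subset (n : ℕ) : V (n + 1) * V (n + 1) ⊆ V n

theorem exists_isNormalNhdsChain [IsTopologicalGroup G] [CompactSpace G] [T1Space G] (a : ℕ → G) :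
    ∃ V, IsNormalNhdsChain V ∧ ∀ n, a n ∈ V n → a n = 1 := by
  choose! F hF hFinv hFconj hFmul using fun (W : Set G) (hW : W ∈ 𝓝 (1 : G)) =>
    exists_conj_invariant_nhds_one_mul_subset hW
  have hC : ∀ n, ({a n} \ {1})ᶜ ∈ 𝓝 (1 : G) := fun n =>
    ((finite_singleton (a n)).sdiff).isClosed.compl_mem_nhds (by simp)
  let W : ℕ → {W : Set G // W ∈ 𝓝 1} := fun n => Nat.rec ⟨univ, univ_mem⟩
    (fun k Wk => ⟨F (Wk.1 ∩ ({a k} \ {1})ᶜ), hF _ (inter_mem Wk.2 (hC k))⟩) n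
  have hW : ∀ n, (W n).1 ∩ ({a n} \ {1})ᶜ ∈ 𝓝 1 := fun n => inter_mem (W n).2 (hC n)
  refine ⟨fun n => F ((W n).1 ∩ ({a n} \ {1})ᶜ),
    ⟨fun n => hF _ (hW n), fun n => hFinv _ (hW n), fun n => hFconj _ (hW n),
      fun n => (hFmul _ (hW (n + 1))).trans inter_subset_left⟩, fun n ha => ?_⟩
  by_contra h1
  have hsub := subset_mul_left _ (mem_of_mem_nhds (hF _ (hW n))) |>.trans (hFmul _ (hW n))
  exact (hsub ha).2 ⟨rfl, h1⟩

namespace IsNormalNhdsChain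

variable {V : ℕ → Set G}

theorem antitone (hV : IsNormalNhdsChain V) : Antitone V := antitone_nat_of_succ_le fun n =>
  (subset_mul_left _ (mem_of_mem_nhds (hV.mem_nhds _))).trans (hV.mul_subset n)

def subgroup (hV : IsNormalNhdsChain V) : Subgroup G where
  carrier := ⋂ n, V n
  mul_mem' hx hy := mem_iInter.2 fun n =>
    hV.mul_subset n (mul_mem_mul (mem_iInter.1 hx _) (mem_iInter.1 hy _))
  one_mem' := mem_iInter.2 fun n => mem_of_mem_nhds (hV.mem_nhds n)
  inv_mem' hx := mem_iInter.2 fun n => by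
    rw [← hV.inv_eq, Set.inv_mem_inv]; exact mem_iInter.1 hx n

theorem normal_subgroup (hV : IsNormalNhdsChain V) : hV.subgroup.Normal :=
  ⟨fun x hx g => mem_iInter.2 fun n => hV.conj_mem n g x (mem_iInter.1 hx n)⟩

theorem iInter_closure_eq [IsTopologicalGroup G] (hV : IsNormalNhdsChain V) :
    ⋂ n, closure (V n) = hV.subgroup := by
  refine (iInter_mono fun n => subset_closure).antisymm' fun x hx => mem_iInter.2 fun n => ?_
  exact hV.mul_subset n
    (closure_subset_mul_self_of_mem_nhds_one (hV.mem_nhds (n + 1)) (mem_iInter.1 hx (n + 1)))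

theorem isClosed_subgroup [IsTopologicalGroup G] (hV : IsNormalNhdsChain V) :
    IsClosed (hV.subgroup : Set G) :=
  hV.iInter_closure_eq ▸ isClosed_iInter fun _ => isClosed_closure

theorem firstCountableTopology_quotient [IsTopologicalGroup G] [CompactSpace G]
    (hV : IsNormalNhdsChain V) :
    FirstCountableTopology (G ⧸ hV.subgroup) := by
  have := hV.normal_subgroup
  let π : G → G ⧸ hV.subgroup := (↑)
  have hbasis : (𝓝 (1 : G ⧸ hV.subgroup)).HasBasis (fun _ : ℕ => True) fun n => π '' V n := by
    refine ⟨fun s => ⟨fun hs => ?_, fun ⟨n, _, hn⟩ => mem_of_superset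
      (QuotientGroup.isOpenMap_coe.image_mem_nhds (hV.mem_nhds n)) hn⟩⟩
    -- `π ⁻¹' s` is a neighbourhood of the compact set `⋂ n, closure (V n)`
    obtain ⟨n, hn⟩ := exists_subset_nhds_of_isCompact' (V := fun n => closure (V n))
      (Antitone.directed_ge fun _ _ h => closure_mono (hV.antitone h))
      (fun _ => isClosed_closure.isCompact) (fun _ => isClosed_closure) (U := π ⁻¹' s)
      fun x hx => QuotientGroup.continuous_mk.continuousAt.preimage_mem_nhds <| by
        rwa [(QuotientGroup.eq_one_iff x).2 (SetLike.mem_coe.1 (hV.iInter_closure_eq ▸ hx))]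
    exact ⟨n, trivial, image_subset_iff.2 (subset_closure.trans hn)⟩
  have := hbasis.isCountablyGenerated
  exact ⟨fun x => map_mul_left_nhds_one x ▸ inferInstance⟩

end IsNormalNhdsChain

end CompactGroup

/-- A countably infinite subgroup of a compact Hausdorff topological group is never
Cayley bounded. -/
theorem countable_infinite_subgroup_of_compact_not_cayleyBounded
    {G : Type*} [Group G] [TopologicalSpace G] [IsTopologicalGroup G]
    [CompactSpace G] [T2Space G] (Γ : Subgroup G) [Countable Γ] [Infinite Γ] :
    ¬ CayleyBounded Γ := by
  intro hΓ
  obtain ⟨a, ha⟩ := exists_surjective_nat Γ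
  obtain ⟨V, hV, haV⟩ := exists_isNormalNhdsChain fun n => (a n : G)
  have := hV.normal_subgroup
  have := hV.isClosed_subgroup
  have := hV.firstCountableTopology_quotient
  let π := (QuotientGroup.mk' hV.subgroup).subgroupMap Γ
  have hπ_inj : Injective π := by
    refine (injective_iff_map_eq_one π).2 fun γ hγ => ?_
    obtain ⟨n, rfl⟩ := ha γ
    have hN : (a n : G) ∈ hV.subgroup := (QuotientGroup.eq_one_iff _).1 (congrArg Subtype.val hγ)
    exact Subtype.ext (haV n (mem_iInter.1 hN n))
  have hπ_surj := (QuotientGroup.mk' hV.subgroup).subgroupMap_surjective Γ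
  have := hπ_surj.countable
  have := Infinite.of_injective π hπ_inj
  exact (Γ.map _).not_cayleyBounded_of_firstCountableTopology (hΓ.of_surjective π hπ_surj)
end

section
/- If a Polish group G has the Bergman property, then every commensurated subgroup of G is commensurate to a normal subgroup of G. -/
open Pointwise

/-- A group has the Bergman property if every increasing exhaustion by symmetric
subsets containing `1` has some term whose some power is the whole group. -/
def BergmanProperty (G : Type*) [Group G] : Prop :=
  ∀ A : ℕ → Set G, (∀ n, A n ⊆ A (n + 1)) → (∀ n, (A n)⁻¹ = A n) →
    (1 : G) ∈ A 0 → (⋃ n, A n) = Set.univ →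
    ∃ n k : ℕ, 1 ≤ k ∧ (A n) ^ k = Set.univ

/-- Two subgroups `H`, `K` of a group are commensurate if `H ∩ K` has finite index in
both `H` and `K`. -/
def Commensurate {G : Type*} [Group G] (H K : Subgroup G) : Prop :=
  K.relIndex H ≠ 0 ∧ H.relIndex K ≠ 0

/-- A subgroup is commensurated if it is commensurate to all of its conjugates. -/
def Commensurated' {G : Type*} [Group G] (C : Subgroup G) : Prop :=
  ∀ g : G, Commensurate C (C.map (MulAut.conj g).toMonoidHom)

/-!
Bergman's property first bounds the indices uniformly: the sets
`Ωₙ = {g | |C : C ∩ gCg⁻¹| ≤ n, |gCg⁻¹ : C ∩ gCg⁻¹| ≤ n}` (`boundedCommensurator C n`)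
are symmetric, increasing, satisfy `Ωₘ Ωₙ ⊆ Ωₘₙ` and exhaust `G`, so some `Ωₙ` is all of `G`.

Then the Bergman–Lenstra argument. Among the subgroups `K` commensurable with `C`, let `m` be
the least possible value of `max_g |K : K ∩ gCg⁻¹|` (`minConjIndex C`). The minimizers are stable
under conjugation and finite intersection, so they generate a normal subgroup `N`, which
contains a finite index subgroup of `C`. If `Z ≤ K` are minimizers and `B = gCg⁻¹` realizes
`|Z : Z ∩ B| = m`, then `|K : K ∩ B| = m` as well, which forces `K ⊆ Z B`. So the minimizers
above `Z` generate a subgroup contained in `Z B`, in which `B`, and hence `C`, has bounded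
index; `N` is the directed union of these subgroups.
-/
namespace Subgroup

variable {G : Type*} [Group G]

theorem relIndex_le_relIndex_mul_relIndex {A B C : Subgroup G} (hCB : C.relIndex B ≠ 0)
    (hBA : B.relIndex A ≠ 0) : C.relIndex A ≤ C.relIndex B * B.relIndex A := by
  have hCBA : C.relIndex (B ⊓ A) ≠ 0 := mt (relIndex_eq_zero_of_le_right inf_le_left) hCB
  calc C.relIndex A ≤ (C ⊓ B).relIndex A := by
        refine relIndex_le_of_le_left inf_le_left ?_
        rw [← relIndex_inf_mul_relIndex]
        exact mul_ne_zero hCBA hBA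
    _ = C.relIndex (B ⊓ A) * B.relIndex A := (relIndex_inf_mul_relIndex C B A).symm
    _ ≤ C.relIndex B * B.relIndex A := by grw [relIndex_le_of_le_right inf_le_left hCB]

theorem surjective_quotientSubgroupOfEmbeddingOfLE_iff {H K : Subgroup G} (B : Subgroup G)
    (hHK : H ≤ K) :
    Function.Surjective (quotientSubgroupOfEmbeddingOfLE B hHK) ↔ (K : Set G) ⊆ H * B := by
  constructor
  · intro hsurj k hk
    obtain ⟨q, hq⟩ := hsurj (⟨k, hk⟩ : K)
    induction q using QuotientGroup.induction_on with | H h => ?_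
    rw [quotientSubgroupOfEmbeddingOfLE_apply_mk, QuotientGroup.eq, mem_subgroupOf] at hq
    exact ⟨h, h.2, _, hq, mul_inv_cancel_left (h : G) k⟩
  · intro hsub q
    induction q using QuotientGroup.induction_on with | H k => ?_
    obtain ⟨h, hh, b, hb, hk⟩ := hsub k.2
    refine ⟨(⟨h, hh⟩ : H), ?_⟩
    rw [quotientSubgroupOfEmbeddingOfLE_apply_mk, QuotientGroup.eq, mem_subgroupOf]
    simpa [← hk] using hb

theorem relIndex_eq_of_subset_mul {H K B : Subgroup G} (hHK : H ≤ K)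
    (hsub : (K : Set G) ⊆ H * B) : B.relIndex K = B.relIndex H :=
  (Nat.card_congr (Equiv.ofBijective _ ⟨(quotientSubgroupOfEmbeddingOfLE B hHK).injective,
    (surjective_quotientSubgroupOfEmbeddingOfLE_iff B hHK).mpr hsub⟩)).symm

theorem subset_mul_of_relIndex_le {H K B : Subgroup G} (hHK : H ≤ K) (hK : B.relIndex K ≠ 0)
    (hle : B.relIndex K ≤ B.relIndex H) : (K : Set G) ⊆ H * B := by
  have : Finite (K ⧸ B.subgroupOf K) := Nat.finite_of_card_ne_zero hK
  exact (surjective_quotientSubgroupOfEmbeddingOfLE_iff B hHK).mp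
    ((quotientSubgroupOfEmbeddingOfLE B hHK).injective.bijective_of_nat_card_le hle).surjective

theorem relIndex_iSup_ne_zero_of_directed {ι : Type*} [Nonempty ι] {B : Subgroup G}
    {K : ι → Subgroup G} (hK : Directed (· ≤ ·) K) (hK0 : ∀ i, B.relIndex (K i) ≠ 0) {m : ℕ}
    (hKm : ∀ i, B.relIndex (K i) ≤ m) : B.relIndex (⨆ i, K i) ≠ 0 := by
  have hbdd : BddAbove (Set.range fun i => B.relIndex (K i)) :=
    ⟨m, Set.forall_mem_range.mpr hKm⟩
  -- `K i₀` has maximal index, so every `K k ≥ K i₀` has the same index and lies in `K i₀ * B`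
  obtain ⟨i₀, hi₀⟩ := Nat.sSup_mem (Set.range_nonempty _) hbdd
  have hsub : ((⨆ i, K i : Subgroup G) : Set G) ⊆ K i₀ * B := by
    rw [coe_iSup_of_directed hK, Set.iUnion_subset_iff]
    intro j
    obtain ⟨k, hi₀k, hjk⟩ := hK i₀ j
    refine (SetLike.coe_subset_coe.mpr hjk).trans (subset_mul_of_relIndex_le hi₀k (hK0 k) ?_)
    exact (le_csSup hbdd ⟨k, rfl⟩).trans_eq hi₀.symm
  rw [relIndex_eq_of_subset_mul (le_iSup K i₀) hsub]
  exact hK0 i₀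

theorem coe_sSup_subset_of_mul_subset {S : Set (Subgroup G)} {Y : Set G} (hY : 1 ∈ Y)
    (hSY : ∀ K ∈ S, (K : Set G) * Y ⊆ Y) : ((sSup S : Subgroup G) : Set G) ⊆ Y := by
  have hle : sSup S ≤ MulAction.stabilizer G Y := by
    refine sSup_le fun K hK k hk => MulAction.mem_stabilizer_iff.mpr ?_
    refine (Set.smul_set_subset_mul hk).trans (hSY K hK) |>.antisymm ?_
    rw [Set.subset_smul_set_iff]
    exact (Set.smul_set_subset_mul (K.inv_mem hk)).trans (hSY K hK)
  intro x hx
  rw [← MulAction.mem_stabilizer_iff.mp (hle hx)]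
  simpa using Set.smul_mem_smul_set (a := x) hY

theorem Commensurable.pointwise_smul {α : Type*} [Group α] [MulDistribMulAction α G] (a : α)
    {H K : Subgroup G} (h : H.Commensurable K) : (a • H).Commensurable (a • K) := by
  unfold Commensurable
  rw [relIndex_pointwise_smul, relIndex_pointwise_smul]
  exact h

theorem conj_mul_smul (g h : G) (H : Subgroup G) :
    MulAut.conj (g * h) • H = MulAut.conj g • MulAut.conj h • H := by
  rw [map_mul, mul_smul]

theorem relIndex_conj_inv_smul (g : G) (H K : Subgroup G) :
    (MulAut.conj g⁻¹ • H).relIndex K = H.relIndex (MulAut.conj g • K) := by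
  rw [← relIndex_pointwise_smul (MulAut.conj g), map_inv, smul_inv_smul]

variable {C : Subgroup G}

def IsConjIndexBounded (C : Subgroup G) (m : ℕ) (K : Subgroup G) : Prop :=
  K.Commensurable C ∧ ∀ g : G, (MulAut.conj g • C).relIndex K ≤ m

noncomputable def minConjIndex (C : Subgroup G) : ℕ :=
  sInf {m | ∃ K, IsConjIndexBounded C m K}

theorem IsConjIndexBounded.mono {m : ℕ} {K K' : Subgroup G} (hC : Commensurated' C)
    (hK : IsConjIndexBounded C m K) (hK' : K'.Commensurable C) (hle : K' ≤ K) :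
    IsConjIndexBounded C m K' :=
  ⟨hK', fun g => (relIndex_le_of_le_right hle (hK.1.trans (hC g).symm).2).trans (hK.2 g)⟩

theorem IsConjIndexBounded.inf {m : ℕ} {K K' : Subgroup G} (hC : Commensurated' C)
    (hK : IsConjIndexBounded C m K) (hK' : IsConjIndexBounded C m K') :
    IsConjIndexBounded C m (K ⊓ K') :=
  hK.mono hC ⟨relIndex_inf_ne_zero hK.1.1 hK'.1.1,
    mt (relIndex_eq_zero_of_le_right inf_le_left) hK.1.2⟩ inf_le_left

theorem IsConjIndexBounded.conj_smul {m : ℕ} {K : Subgroup G} (hC : Commensurated' C)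
    (hK : IsConjIndexBounded C m K) (g : G) : IsConjIndexBounded C m (MulAut.conj g • K) := by
  refine ⟨(hK.1.pointwise_smul _).trans (hC g), fun h => ?_⟩
  rw [← mul_inv_cancel_left g h, conj_mul_smul, relIndex_pointwise_smul]
  exact hK.2 _

theorem exists_isConjIndexBounded_minConjIndex {M : ℕ}
    (hM : ∀ g : G, (MulAut.conj g • C).relIndex C ≤ M) :
    ∃ K, IsConjIndexBounded C (minConjIndex C) K :=
  Nat.sInf_mem (s := {m | ∃ K, IsConjIndexBounded C m K}) ⟨M, C, Commensurable.refl C, hM⟩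

theorem IsConjIndexBounded.exists_relIndex_eq_minConjIndex {K : Subgroup G}
    (hK : IsConjIndexBounded C (minConjIndex C) K) :
    ∃ g : G, (MulAut.conj g • C).relIndex K = minConjIndex C := by
  by_contra! hne
  have hlt g : (MulAut.conj g • C).relIndex K < minConjIndex C := (hK.2 g).lt_of_ne (hne g)
  have hle : minConjIndex C ≤ minConjIndex C - 1 :=
    Nat.sInf_le (⟨K, hK.1, fun g => Nat.le_sub_one_of_lt (hlt g)⟩ :
      ∃ K, IsConjIndexBounded C (minConjIndex C - 1) K)
  have := hlt 1
  omega

def supMinimizersAbove (C Z : Subgroup G) : Subgroup G :=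
  sSup {K | IsConjIndexBounded C (minConjIndex C) K ∧ Z ≤ K}

theorem supMinimizersAbove_anti {Z Z' : Subgroup G} (h : Z' ≤ Z) :
    supMinimizersAbove C Z ≤ supMinimizersAbove C Z' :=
  sSup_le_sSup fun _ hK => ⟨hK.1, h.trans hK.2⟩

theorem le_supMinimizersAbove {Z : Subgroup G} (hZ : IsConjIndexBounded C (minConjIndex C) Z) :
    Z ≤ supMinimizersAbove C Z :=
  le_sSup (⟨hZ, le_rfl⟩ : IsConjIndexBounded C (minConjIndex C) Z ∧ Z ≤ Z)

theorem coe_supMinimizersAbove_subset_mul {Z : Subgroup G} (hC : Commensurated' C) {g : G}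
    (hg : (MulAut.conj g • C).relIndex Z = minConjIndex C) :
    (supMinimizersAbove C Z : Set G) ⊆ Z * (MulAut.conj g • C) := by
  set B := MulAut.conj g • C
  have hKZB : ∀ K, IsConjIndexBounded C (minConjIndex C) K → Z ≤ K → (K : Set G) ⊆ Z * B :=
    fun K hK hZK =>
      subset_mul_of_relIndex_le hZK (hK.1.trans (hC g).symm).2 ((hK.2 g).trans hg.ge)
  refine coe_sSup_subset_of_mul_subset ⟨1, Z.one_mem, 1, B.one_mem, one_mul 1⟩ ?_
  rintro K ⟨hK, hZK⟩ x hx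
  obtain ⟨k, hk, _, hzb, rfl⟩ := Set.mem_mul.mp hx
  obtain ⟨z, hz, b, hb, rfl⟩ := Set.mem_mul.mp hzb
  obtain ⟨z', hz', b', hb', hkz⟩ := Set.mem_mul.mp (hKZB K hK hZK (K.mul_mem hk (hZK hz)))
  refine Set.mem_mul.mpr ⟨z', hz', b' * b, B.mul_mem hb' hb, ?_⟩
  rw [← mul_assoc, hkz, mul_assoc]

theorem relIndex_supMinimizersAbove {Z : Subgroup G} {M : ℕ} (hC : Commensurated' C)
    (hM : ∀ g : G, (MulAut.conj g • C).relIndex C ≤ M)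
    (hZ : IsConjIndexBounded C (minConjIndex C) Z) :
    C.relIndex (supMinimizersAbove C Z) ≠ 0 ∧
      C.relIndex (supMinimizersAbove C Z) ≤ M * minConjIndex C := by
  obtain ⟨g, hg⟩ := hZ.exists_relIndex_eq_minConjIndex
  have hBN : (MulAut.conj g • C).relIndex (supMinimizersAbove C Z) = minConjIndex C :=
    (relIndex_eq_of_subset_mul (le_supMinimizersAbove hZ)
      (coe_supMinimizersAbove_subset_mul hC hg)).trans hg
  have hBN0 : (MulAut.conj g • C).relIndex (supMinimizersAbove C Z) ≠ 0 := by
    rw [hBN, ← hg]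
    exact (hZ.1.trans (hC g).symm).2
  have hCB : C.relIndex (MulAut.conj g • C) ≤ M := by
    rw [← relIndex_conj_inv_smul]
    exact hM _
  refine ⟨relIndex_ne_zero_trans (hC g).2 hBN0, ?_⟩
  calc C.relIndex (supMinimizersAbove C Z)
      ≤ C.relIndex (MulAut.conj g • C) *
          (MulAut.conj g • C).relIndex (supMinimizersAbove C Z) :=
        relIndex_le_relIndex_mul_relIndex (hC g).2 hBN0
    _ ≤ M * minConjIndex C := by rw [hBN]; gcongr

theorem normal_sSup_isConjIndexBounded_minConjIndex (hC : Commensurated' C) :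
    (sSup {K | IsConjIndexBounded C (minConjIndex C) K}).Normal := by
  refine ⟨fun n hn g => ?_⟩
  have hle : MulAut.conj g • sSup {K | IsConjIndexBounded C (minConjIndex C) K} ≤
      sSup {K | IsConjIndexBounded C (minConjIndex C) K} := by
    rw [pointwise_smul_subset_iff]
    exact sSup_le fun K hK => pointwise_smul_subset_iff.mp (le_sSup (hK.conj_smul hC g))
  exact hle (smul_mem_pointwise_smul n _ _ hn)

theorem commensurate_sSup_isConjIndexBounded_minConjIndex {M : ℕ} (hC : Commensurated' C)
    (hM : ∀ g : G, (MulAut.conj g • C).relIndex C ≤ M) :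
    Commensurate C (sSup {K | IsConjIndexBounded C (minConjIndex C) K}) := by
  set ι := {Z // IsConjIndexBounded C (minConjIndex C) Z}
  obtain ⟨Z₀, hZ₀⟩ := exists_isConjIndexBounded_minConjIndex hM
  have : Nonempty ι := ⟨⟨Z₀, hZ₀⟩⟩
  have hdir : Directed (· ≤ ·) fun Z : ι => supMinimizersAbove C Z :=
    fun Z₁ Z₂ => ⟨(⟨Z₁.1 ⊓ Z₂.1, Z₁.2.inf hC Z₂.2⟩ : ι),
      supMinimizersAbove_anti inf_le_left, supMinimizersAbove_anti inf_le_right⟩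
  have hle : sSup {K | IsConjIndexBounded C (minConjIndex C) K} ≤
      ⨆ Z : ι, supMinimizersAbove C Z :=
    sSup_le fun K hK => (le_supMinimizersAbove hK).trans
      (le_iSup (fun Z : ι => supMinimizersAbove C Z) ⟨K, hK⟩)
  refine ⟨mt (relIndex_eq_zero_of_le_left (le_sSup hZ₀)) hZ₀.1.1,
    mt (relIndex_eq_zero_of_le_right hle) ?_⟩
  exact relIndex_iSup_ne_zero_of_directed hdir
    (fun Z => (relIndex_supMinimizersAbove hC hM Z.2).1)
    (fun Z => (relIndex_supMinimizersAbove hC hM Z.2).2)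

theorem exists_normal_commensurate_of_relIndex_conj_le {M : ℕ} (hC : Commensurated' C)
    (hM : ∀ g : G, (MulAut.conj g • C).relIndex C ≤ M) :
    ∃ N : Subgroup G, N.Normal ∧ Commensurate C N :=
  ⟨_, normal_sSup_isConjIndexBounded_minConjIndex hC,
    commensurate_sSup_isConjIndexBounded_minConjIndex hC hM⟩

def boundedCommensurator (C : Subgroup G) (n : ℕ) : Set G :=
  {g | (MulAut.conj g • C).relIndex C ≤ n ∧ C.relIndex (MulAut.conj g • C) ≤ n}

theorem boundedCommensurator_mono : Monotone (boundedCommensurator C) :=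
  fun _ _ hmn _ hg => ⟨hg.1.trans hmn, hg.2.trans hmn⟩

theorem inv_boundedCommensurator (n : ℕ) :
    (boundedCommensurator C n)⁻¹ = boundedCommensurator C n := by
  ext g
  have e : C.relIndex (MulAut.conj g⁻¹ • C) = (MulAut.conj g • C).relIndex C := by
    rw [← relIndex_conj_inv_smul, inv_inv]
  change _ ∧ _ ↔ _ ∧ _
  rw [relIndex_conj_inv_smul, e, and_comm]

theorem one_mem_boundedCommensurator : (1 : G) ∈ boundedCommensurator C 1 := by
  simp [boundedCommensurator]

theorem boundedCommensurator_mul_subset (hC : Commensurated' C) (m n : ℕ) :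
    boundedCommensurator C m * boundedCommensurator C n ⊆ boundedCommensurator C (m * n) := by
  rintro _ ⟨g, ⟨hg₁, hg₂⟩, h, ⟨hh₁, hh₂⟩, rfl⟩
  have e₁ : (MulAut.conj (g * h) • C).relIndex (MulAut.conj g • C) =
      (MulAut.conj h • C).relIndex C := by
    rw [conj_mul_smul, relIndex_pointwise_smul]
  have e₂ : (MulAut.conj g • C).relIndex (MulAut.conj (g * h) • C) =
      C.relIndex (MulAut.conj h • C) := by
    rw [conj_mul_smul, relIndex_pointwise_smul]
  constructor
  · calc (MulAut.conj (g * h) • C).relIndex C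
        ≤ (MulAut.conj (g * h) • C).relIndex (MulAut.conj g • C) *
            (MulAut.conj g • C).relIndex C :=
          relIndex_le_relIndex_mul_relIndex (e₁ ▸ (hC h).1) (hC g).1
      _ ≤ m * n := by rw [e₁, mul_comm]; gcongr
  · calc C.relIndex (MulAut.conj (g * h) • C)
        ≤ C.relIndex (MulAut.conj g • C) *
            (MulAut.conj g • C).relIndex (MulAut.conj (g * h) • C) :=
          relIndex_le_relIndex_mul_relIndex (hC g).2 (e₂ ▸ (hC h).2)
      _ ≤ m * n := by rw [e₂]; gcongr

theorem exists_mem_boundedCommensurator (g : G) : ∃ n, g ∈ boundedCommensurator C n :=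
  ⟨max ((MulAut.conj g • C).relIndex C) (C.relIndex (MulAut.conj g • C)),
    le_max_left _ _, le_max_right _ _⟩

end Subgroup

open Subgroup

theorem BergmanProperty.exists_eq_univ {G : Type*} [Group G] (hB : BergmanProperty G)
    {Ω : ℕ → Set G} (hmono : Monotone Ω) (hinv : ∀ n, (Ω n)⁻¹ = Ω n) (hone : (1 : G) ∈ Ω 1)
    (hmul : ∀ m n, Ω m * Ω n ⊆ Ω (m * n)) (hcover : ∀ g, ∃ n, g ∈ Ω n) :
    ∃ n, Ω n = Set.univ := by
  have hpow : ∀ n k, Ω n ^ k ⊆ Ω (n ^ k) := by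
    intro n k
    induction k with
    | zero => simpa using hone
    | succ k ih =>
      rw [pow_succ, pow_succ]
      exact (Set.mul_subset_mul ih subset_rfl).trans (hmul _ _)
  have hcover' : ⋃ n, Ω (n + 1) = Set.univ := Set.eq_univ_of_forall fun g =>
    let ⟨n, hn⟩ := hcover g
    Set.mem_iUnion.mpr ⟨n, hmono n.le_succ hn⟩
  obtain ⟨n, k, -, hk⟩ := hB (fun n => Ω (n + 1)) (fun n => hmono n.succ.le_succ)
    (fun n => hinv _) hone hcover'
  exact ⟨(n + 1) ^ k, Set.eq_univ_of_univ_subset (hk ▸ hpow _ _)⟩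

theorem BergmanProperty.exists_relIndex_conj_le {G : Type*} [Group G] (hB : BergmanProperty G)
    {C : Subgroup G} (hC : Commensurated' C) :
    ∃ M, ∀ g : G, (MulAut.conj g • C).relIndex C ≤ M := by
  obtain ⟨M, hM⟩ := hB.exists_eq_univ boundedCommensurator_mono inv_boundedCommensurator
    one_mem_boundedCommensurator (boundedCommensurator_mul_subset hC)
    exists_mem_boundedCommensurator
  exact ⟨M, fun g => (hM.symm ▸ Set.mem_univ g : g ∈ boundedCommensurator C M).1⟩

theorem commensurated_commensurate_normal_of_bergman_general
    {G : Type*} [Group G]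
    (hB : BergmanProperty G) (C : Subgroup G) (hC : Commensurated' C) :
    ∃ N : Subgroup G, N.Normal ∧ Commensurate C N := by
  obtain ⟨M, hM⟩ := hB.exists_relIndex_conj_le hC
  exact exists_normal_commensurate_of_relIndex_conj_le hC hM

/-- If a Polish group has the Bergman property, then every commensurated subgroup is
commensurate to a normal subgroup. -/
theorem commensurated_commensurate_normal_of_bergman
    {G : Type*} [Group G] [TopologicalSpace G] [IsTopologicalGroup G] [PolishSpace G]
    (hB : BergmanProperty G) (C : Subgroup G) (hC : Commensurated' C) :
    ∃ N : Subgroup G, N.Normal ∧ Commensurate C N :=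
  commensurated_commensurate_normal_of_bergman_general hB C hC
end

section
/- If a Polish group G has the invariant automatic continuity property and the Bergman property, then G has the locally compact automatic continuity property. -/
open Pointwise

/-- A topological group is SIN if it has a basis at `1` of conjugation-invariant
neighborhoods. -/
def IsSINGroup (H : Type*) [Group H] [TopologicalSpace H] : Prop :=
  ∀ U ∈ nhds (1 : H), ∃ V ∈ nhds (1 : H), V ⊆ U ∧
    ∀ h : H, (fun x => h * x * h⁻¹) '' V = V

/-- A topological group `G` has the invariant automatic continuity property if every
homomorphism from `G` to a SIN Polish group is continuous. -/
def InvariantACP (G : Type*) [Group G] [TopologicalSpace G] : Prop :=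
  ∀ (H : Type) [Group H] [TopologicalSpace H] [IsTopologicalGroup H] [PolishSpace H],
    IsSINGroup H → ∀ φ : G →* H, Continuous φ

/-- A topological group `G` has the locally compact automatic continuity property if
every homomorphism from `G` to a locally compact Polish group is continuous. -/
def LocallyCompactACP (G : Type*) [Group G] [TopologicalSpace G] : Prop :=
  ∀ (H : Type) [Group H] [TopologicalSpace H] [IsTopologicalGroup H] [PolishSpace H]
    [LocallyCompactSpace H], ∀ φ : G →* H, Continuous φ

/-!
A homomorphism `φ : G → H` into a locally compact Polish group `H` pulls a symmetric
exhaustion of `H` by compact sets back to a Bergman sequence of `G`, so the range of `φ`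
lies in a power of one compact set. Its closure `M` is then a compact, hence SIN, Polish
group, and invariant automatic continuity applies to `φ : G → M`.
-/

open Set

theorem IsCompact.pow_s16 {M : Type*} [Monoid M] [TopologicalSpace M] [ContinuousMul M]
    {s : Set M} (hs : IsCompact s) : ∀ k : ℕ, IsCompact (s ^ k)
  | 0 => by simp
  | k + 1 => by rw [pow_succ]; exact (hs.pow_s16 k).mul hs

theorem isSINGroup_of_compactSpace (M : Type*) [Group M] [TopologicalSpace M]
    [IsTopologicalGroup M] [CompactSpace M] : IsSINGroup M := by
  intro U hU
  refine ⟨{x | ∀ h : M, h * x * h⁻¹ ∈ U}, ?_, fun x hx => by simpa using hx 1, fun g => ?_⟩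
  · -- tube lemma: compactness of `M` makes the neighborhood uniform in the conjugator
    have hconj : Continuous fun z : M × M => z.2 * z.1 * z.2⁻¹ := by fun_prop
    have : ∀ᶠ x in nhds (1 : M), ∀ h ∈ univ, h * x * h⁻¹ ∈ U :=
      isCompact_univ.eventually_forall_of_forall_eventually fun h _ =>
        hconj.continuousAt.preimage_mem_nhds (by simpa using hU)
    exact this.mono fun x hx h => hx h trivial
  · refine Subset.antisymm ?_ fun y hy => ⟨g⁻¹ * y * g, fun h => ?_, by group⟩
    · rintro _ ⟨x, hx, rfl⟩ h
      simpa [mul_assoc] using hx (h * g)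
    · simpa [mul_assoc] using hy (h * g⁻¹)

theorem BergmanProperty.exists_range_subset_pow {G H : Type*} [Group G] [Group H]
    (hB : BergmanProperty G) (φ : G →* H) {T : ℕ → Set H} (hmono : Monotone T)
    (hsymm : ∀ n, (T n)⁻¹ = T n) (hone : 1 ∈ T 0) (hcover : ⋃ n, T n = univ) :
    ∃ n k : ℕ, range φ ⊆ T n ^ k := by
  obtain ⟨n, k, -, hk⟩ := hB (fun n => φ ⁻¹' T n) (fun n => preimage_mono (hmono n.le_succ))
    (fun n => by ext x; rw [mem_inv, mem_preimage, mem_preimage, map_inv, ← mem_inv, hsymm])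
    (by simpa using hone)
    (by rw [← preimage_iUnion, hcover, preimage_univ])
  refine ⟨n, k, ?_⟩
  rw [← image_univ, ← hk, image_pow]
  exact pow_subset_pow_left (image_preimage_subset _ _)

theorem BergmanProperty.isCompact_closure_range {G H : Type*} [Group G] [Group H]
    [TopologicalSpace H] [IsTopologicalGroup H] [SigmaCompactSpace H]
    (hB : BergmanProperty G) (φ : G →* H) : IsCompact (closure (range φ)) := by
  let T : ℕ → Set H := fun n => insert 1 (compactCovering H n ∪ (compactCovering H n)⁻¹)
  have hmono : Monotone T := fun m n hmn =>
    insert_subset_insert (union_subset_union (compactCovering_subset H hmn)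
      (inv_subset_inv.2 (compactCovering_subset H hmn)))
  have hsymm : ∀ n, (T n)⁻¹ = T n := fun n => by
    simp only [T, insert_eq, union_inv, inv_singleton, inv_one, inv_inv, union_comm (_⁻¹)]
  have hcover : ⋃ n, T n = univ :=
    eq_univ_of_univ_subset <| iUnion_compactCovering H ▸
      iUnion_mono fun n => subset_union_left.trans (subset_insert _ _)
  have hcompact : ∀ n, IsCompact (T n) := fun n =>
    ((isCompact_compactCovering H n).union (isCompact_compactCovering H n).inv).insert 1
  obtain ⟨n, k, hk⟩ := hB.exists_range_subset_pow φ hmono hsymm (mem_insert _ _) hcover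
  exact ((hcompact n).pow_s16 k).closure_of_subset hk

theorem locallyCompactACP_of_invariantACP_of_bergman_general
    {G : Type*} [Group G] [TopologicalSpace G]
    (hinv : InvariantACP G) (hB : BergmanProperty G) :
    LocallyCompactACP G := by
  intro H _ _ _ _ _ φ
  let M := φ.range.topologicalClosure
  have hclosed : IsClosed (M : Set H) := φ.range.isClosed_topologicalClosure
  have : CompactSpace M := isCompact_iff_compactSpace.mp (hB.isCompact_closure_range φ)
  have : PolishSpace M := hclosed.polishSpace
  have hφM : Continuous (φ.codRestrict M fun g => subset_closure ⟨g, rfl⟩) :=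
    hinv M (isSINGroup_of_compactSpace M) _
  exact continuous_subtype_val.comp hφM

/-- A Polish group with the invariant automatic continuity property and the Bergman
property has the locally compact automatic continuity property. -/
theorem locallyCompactACP_of_invariantACP_of_bergman
    {G : Type*} [Group G] [TopologicalSpace G] [IsTopologicalGroup G] [PolishSpace G]
    (hinv : InvariantACP G) (hB : BergmanProperty G) :
    LocallyCompactACP G :=
  locallyCompactACP_of_invariantACP_of_bergman_general hinv hB
end
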